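/- arXiv:1203.4870 — 2 statements merged into one kernel-verified Lean document; each statement's English description precedes it below -/
import Mathlib

section
/- Let M ≥ 1, let s ∈ ℝ^M be a sign vector, and let D = {e ∈ ℝ^M : ‖e‖₂ = 1 and −s_i e_i ≥ 0 for all i}. Let v ∈ ℝ^M, define v̄ = −s ⊙ v, and let I = {i : v̄_i > 0}. If I is nonempty, define e* ∈ ℝ^M by e*_i = v_i / ‖v_I‖₂ for i ∈ I and e*_i = 0 for i ∉ I, where v_I denotes the restriction of v to the indices in I. Then e* ∈ D and ‖e* − v‖₂ ≤ ‖e − v‖₂ for every e ∈ D; that is, e* is a Euclidean projection of v onto the nonconvex set D. -/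
/-!
Minimising `‖e - v‖` over unit vectors `e` is the same as maximising `⟪e, v⟫`. Let `w` be `v`
with the coordinates outside `I` set to zero. A feasible `e` has `e i * v i ≤ 0` off `I`, so
`⟪e, v⟫ ≤ ⟪e, w⟫ ≤ ‖w‖` by Cauchy–Schwarz, and `e* = w / ‖w‖` attains `⟪e*, v⟫ = ‖w‖`.
-/

open Finset RealInnerProductSpace

theorem norm_sub_le_norm_sub_of_norm_eq_of_inner_le {F : Type*} [NormedAddCommGroup F]
    [InnerProductSpace ℝ F] {e e' v : F} (hnorm : ‖e‖ = ‖e'‖) (hinner : ⟪e, v⟫ ≤ ⟪e', v⟫) :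
    ‖e' - v‖ ≤ ‖e - v‖ := by
  refine (pow_le_pow_iff_left₀ (norm_nonneg _) (norm_nonneg _) two_ne_zero).mp ?_
  rw [norm_sub_sq_real, norm_sub_sq_real, hnorm]
  linarith

theorem mul_nonpos_of_neg_mul_nonneg_of_neg_mul_nonpos {s a b : ℝ} (hs : s ≠ 0)
    (ha : 0 ≤ -s * a) (hb : -s * b ≤ 0) : a * b ≤ 0 := by
  have hprod : (-s * a) * (-s * b) = s ^ 2 * (a * b) := by ring
  have hsq : 0 < s ^ 2 := by positivity
  nlinarith [mul_nonpos_of_nonneg_of_nonpos ha hb]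

namespace EuclideanSpace

variable {ι : Type*} [DecidableEq ι]

/-- The vector `v_I` of the paper, padded with zeros outside `I`. -/
noncomputable def restrictTo (I : Finset ι) (v : EuclideanSpace ℝ ι) : EuclideanSpace ℝ ι :=
  WithLp.toLp 2 fun i => if i ∈ I then v i else 0

variable (I : Finset ι) (v : EuclideanSpace ℝ ι)

theorem restrictTo_apply (i : ι) : restrictTo I v i = if i ∈ I then v i else 0 := rfl

variable [Fintype ι]

theorem norm_restrictTo : ‖restrictTo I v‖ = √(∑ j ∈ I, v j ^ 2) := by
  rw [EuclideanSpace.norm_eq]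
  simp only [restrictTo_apply, Real.norm_eq_abs, sq_abs, ite_pow, ne_eq, OfNat.ofNat_ne_zero,
    not_false_eq_true, zero_pow, sum_ite_mem, univ_inter]

theorem inner_restrictTo_left : ⟪restrictTo I v, v⟫ = ‖restrictTo I v‖ ^ 2 := by
  rw [real_inner_comm, norm_restrictTo, Real.sq_sqrt (sum_nonneg fun j _ => sq_nonneg (v j)), PiLp.inner_apply]
  simp only [restrictTo_apply, RCLike.inner_apply, Real.ringHom_apply, ite_mul, zero_mul,
    sum_ite_mem, univ_inter, ← sq]

theorem inner_le_norm_mul_norm_restrictTo {e : EuclideanSpace ℝ ι}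
    (hsign : ∀ i ∉ I, e i * v i ≤ 0) : ⟪e, v⟫ ≤ ‖e‖ * ‖restrictTo I v‖ := by
  have hrest : ⟪e, v - restrictTo I v⟫ ≤ 0 := by
    rw [PiLp.inner_apply]
    refine sum_nonpos fun i _ => ?_
    by_cases hi : i ∈ I
    · simp [restrictTo_apply, hi]
    · simpa [restrictTo_apply, hi, mul_comm] using hsign i hi
  calc ⟪e, v⟫ = ⟪e, restrictTo I v⟫ + ⟪e, v - restrictTo I v⟫ := by
        rw [← inner_add_right, add_sub_cancel]
    _ ≤ ‖e‖ * ‖restrictTo I v‖ := by linarith [real_inner_le_norm e (restrictTo I v)]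

end EuclideanSpace

open EuclideanSpace

theorem stmt_0_general (M : ℕ)
    (s : EuclideanSpace ℝ (Fin M)) (hs : ∀ i, s i = 1 ∨ s i = -1)
    (D : Set (EuclideanSpace ℝ (Fin M)))
    (hD : D = {e : EuclideanSpace ℝ (Fin M) | ‖e‖ = 1 ∧ ∀ i, -(s i) * e i ≥ 0})
    (v : EuclideanSpace ℝ (Fin M))
    (vbar : Fin M → ℝ) (hvbar : ∀ i, vbar i = -(s i) * v i)
    (I : Finset (Fin M)) (hI : I = Finset.univ.filter (fun i => 0 < vbar i))
    (hInonempty : I.Nonempty)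
    (estar : EuclideanSpace ℝ (Fin M))
    (hestar : ∀ i, estar i =
      if i ∈ I then v i / Real.sqrt (∑ j ∈ I, (v j) ^ 2) else 0) :
    estar ∈ D ∧ ∀ e ∈ D, ‖estar - v‖ ≤ ‖e - v‖ := by
  set w := restrictTo I v
  have hmemI : ∀ i, i ∈ I ↔ 0 < -(s i) * v i := by simp [hI, hvbar]
  have hw_pos : 0 < ‖w‖ := by
    obtain ⟨i, hi⟩ := hInonempty
    refine norm_pos_iff.mpr fun hw => ?_
    have hvi : v i = 0 := by
      rw [← show w i = v i from if_pos hi, hw, PiLp.zero_apply]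
    simpa [hvi] using (hmemI i).mp hi
  have hestar_eq : estar = ‖w‖⁻¹ • w := by
    ext i
    rw [hestar, ← norm_restrictTo, PiLp.smul_apply, restrictTo_apply, smul_eq_mul, mul_ite,
      mul_zero, inv_mul_eq_div]
  have hestar_norm : ‖estar‖ = 1 := by
    rw [hestar_eq, norm_smul, norm_inv, norm_norm, inv_mul_cancel₀ hw_pos.ne']
  have hestar_inner : ⟪estar, v⟫ = ‖w‖ := by
    rw [hestar_eq, real_inner_smul_left, inner_restrictTo_left, sq, inv_mul_cancel_left₀ hw_pos.ne']
  subst hD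
  refine ⟨⟨hestar_norm, fun i => ?_⟩, fun e ⟨he_norm, he_sign⟩ => ?_⟩
  · rw [hestar_eq, PiLp.smul_apply, restrictTo_apply, smul_eq_mul, mul_left_comm]
    split_ifs with hi
    · exact mul_nonneg (inv_nonneg.mpr hw_pos.le) ((hmemI i).mp hi).le
    · simp
  · have hsign : ∀ i ∉ I, e i * v i ≤ 0 := fun i hi =>
      mul_nonpos_of_neg_mul_nonneg_of_neg_mul_nonpos (by rcases hs i with h | h <;> simp [h])
        (he_sign i) (not_lt.mp fun h => hi ((hmemI i).mpr h))
    refine norm_sub_le_norm_sub_of_norm_eq_of_inner_le (he_norm.trans hestar_norm.symm) ?_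
    calc ⟪e, v⟫ ≤ ‖e‖ * ‖w‖ := inner_le_norm_mul_norm_restrictTo I v hsign
      _ = ⟪estar, v⟫ := by rw [he_norm, one_mul, hestar_inner]

/-- Case 1 of Lemma 1: projection onto the feasible set of quantization errors in
1-bit CS, when the index set `I` of positive entries of `v̄ = -s ⊙ v` is nonempty. -/
theorem stmt_0 (M : ℕ) (hM : 1 ≤ M)
    (s : EuclideanSpace ℝ (Fin M)) (hs : ∀ i, s i = 1 ∨ s i = -1)
    (D : Set (EuclideanSpace ℝ (Fin M)))
    (hD : D = {e : EuclideanSpace ℝ (Fin M) | ‖e‖ = 1 ∧ ∀ i, -(s i) * e i ≥ 0})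
    (v : EuclideanSpace ℝ (Fin M))
    (vbar : Fin M → ℝ) (hvbar : ∀ i, vbar i = -(s i) * v i)
    (I : Finset (Fin M)) (hI : I = Finset.univ.filter (fun i => 0 < vbar i))
    (hInonempty : I.Nonempty)
    (estar : EuclideanSpace ℝ (Fin M))
    (hestar : ∀ i, estar i =
      if i ∈ I then v i / Real.sqrt (∑ j ∈ I, (v j) ^ 2) else 0) :
    estar ∈ D ∧ ∀ e ∈ D, ‖estar - v‖ ≤ ‖e - v‖ :=
  stmt_0_general M s hs D hD v vbar hvbar I hI hInonempty estar hestar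
end

section
/- Let M ≥ 1, let s ∈ ℝ^M be a sign vector, and let D = {e ∈ ℝ^M : ‖e‖₂ = 1 and −s_i e_i ≥ 0 for all i}. Let v ∈ ℝ^M and define v̄ = −s ⊙ v. Suppose v̄_i ≤ 0 for all i (i.e., the set {i : v̄_i > 0} is empty), and let i₀ be an index attaining the maximum of v̄ over all coordinates. Define e* ∈ ℝ^M by e*_{i₀} = −s_{i₀} and e*_i = 0 for all i ≠ i₀. Then e* ∈ D and ‖e* − v‖₂ ≤ ‖e − v‖₂ for every e ∈ D; that is, e* is a Euclidean projection of v onto the nonconvex set D. -/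
/-!
Write `ē = -s ⊙ e` and `v̄ = -s ⊙ v`. Since `s ⊙ s = 1`, `⟪e, v⟫ = ⟪ē, v̄⟫`, and for `e ∈ D` the
vector `ē` is a nonnegative unit vector, so `∑ ēᵢ ≥ (∑ ēᵢ²)^{1/2} = 1`. As `v̄ ≤ v̄_{i₀} ≤ 0`, this
gives `⟪e, v⟫ ≤ (∑ ēᵢ) v̄_{i₀} ≤ v̄_{i₀} = ⟪e*, v⟫`. On the unit sphere a larger inner product with `v`
means a smaller distance to `v`.
-/

open Finset RealInnerProductSpace

theorem norm_sub_le_norm_sub_of_inner_le {F : Type*} [NormedAddCommGroup F]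
    [InnerProductSpace ℝ F] {a b : F} (v : F) (hab : ‖a‖ = ‖b‖) (h : ⟪b, v⟫ ≤ ⟪a, v⟫) :
    ‖a - v‖ ≤ ‖b - v‖ := by
  refine (sq_le_sq₀ (norm_nonneg _) (norm_nonneg _)).1 ?_
  rw [norm_sub_sq_real, norm_sub_sq_real, hab]
  linarith

theorem Finset.one_le_sum_of_sum_sq_eq_one {ι : Type*} {s : Finset ι} {x : ι → ℝ}
    (hx : ∀ i ∈ s, 0 ≤ x i) (hsq : ∑ i ∈ s, x i ^ 2 = 1) : 1 ≤ ∑ i ∈ s, x i := by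
  have h := sum_sq_le_sq_sum_of_nonneg hx
  rw [hsq] at h
  nlinarith [sum_nonneg hx]

theorem Finset.sum_mul_le_of_sum_sq_eq_one {ι : Type*} {s : Finset ι} {x y : ι → ℝ} {c : ℝ}
    (hx : ∀ i ∈ s, 0 ≤ x i) (hsq : ∑ i ∈ s, x i ^ 2 = 1) (hy : ∀ i ∈ s, y i ≤ c) (hc : c ≤ 0) :
    ∑ i ∈ s, x i * y i ≤ c :=
  calc ∑ i ∈ s, x i * y i
      ≤ ∑ i ∈ s, x i * c := sum_le_sum fun i hi => mul_le_mul_of_nonneg_left (hy i hi) (hx i hi)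
    _ = (∑ i ∈ s, x i) * c := (sum_mul ..).symm
    _ ≤ 1 * c := mul_le_mul_of_nonpos_right (one_le_sum_of_sum_sq_eq_one hx hsq) hc
    _ = c := one_mul c

theorem stmt_1_general (M : ℕ)
    (s : EuclideanSpace ℝ (Fin M)) (hs : ∀ i, s i = 1 ∨ s i = -1)
    (D : Set (EuclideanSpace ℝ (Fin M)))
    (hD : D = {e : EuclideanSpace ℝ (Fin M) | ‖e‖ = 1 ∧ ∀ i, -(s i) * e i ≥ 0})
    (v : EuclideanSpace ℝ (Fin M))
    (vbar : Fin M → ℝ) (hvbar : ∀ i, vbar i = -(s i) * v i)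
    (hneg : ∀ i, vbar i ≤ 0)
    (i₀ : Fin M) (hi₀ : ∀ i, vbar i ≤ vbar i₀)
    (estar : EuclideanSpace ℝ (Fin M))
    (hestar : ∀ i, estar i = if i = i₀ then -(s i₀) else 0) :
    estar ∈ D ∧ ∀ e ∈ D, ‖estar - v‖ ≤ ‖e - v‖ := by
  subst hD
  have hss i : s i * s i = 1 := mul_self_eq_one_iff.mpr (hs i)
  obtain rfl : estar = EuclideanSpace.single i₀ (-(s i₀)) := by
    ext i
    simp [hestar, PiLp.single_apply]
  have hstar_norm : ‖EuclideanSpace.single i₀ (-(s i₀))‖ = 1 := by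
    rcases hs i₀ with h | h <;> simp [h]
  refine ⟨⟨hstar_norm, fun i => ?_⟩, fun e ⟨he_norm, he_sign⟩ => ?_⟩
  · by_cases h : i = i₀
    · simp [h, hss]
    · simp [h]
  refine norm_sub_le_norm_sub_of_inner_le v (hstar_norm.trans he_norm.symm) ?_
  have he_sq : ∑ i, (-(s i) * e i) ^ 2 = 1 := by
    simp_rw [mul_pow, neg_sq, sq (s _), hss, one_mul, ← EuclideanSpace.real_norm_sq_eq, he_norm,
      one_pow]
  calc ⟪e, v⟫ = ∑ i, (-(s i) * e i) * vbar i := by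
        simp only [PiLp.inner_apply, RCLike.inner_apply, conj_trivial, hvbar]
        refine sum_congr rfl fun i _ => ?_
        linear_combination (-(e i) * v i) * hss i
    _ ≤ vbar i₀ :=
        sum_mul_le_of_sum_sq_eq_one (fun i _ => he_sign i) he_sq (fun i _ => hi₀ i) (hneg i₀)
    _ = ⟪EuclideanSpace.single i₀ (-(s i₀)), v⟫ := by
        simp [EuclideanSpace.inner_single_left, hvbar]

/-- Case 2 of Lemma 1: projection onto the feasible set of quantization errors in
1-bit CS, when all entries of `v̄ = -s ⊙ v` are nonpositive. -/
theorem stmt_1 (M : ℕ) (hM : 1 ≤ M)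
    (s : EuclideanSpace ℝ (Fin M)) (hs : ∀ i, s i = 1 ∨ s i = -1)
    (D : Set (EuclideanSpace ℝ (Fin M)))
    (hD : D = {e : EuclideanSpace ℝ (Fin M) | ‖e‖ = 1 ∧ ∀ i, -(s i) * e i ≥ 0})
    (v : EuclideanSpace ℝ (Fin M))
    (vbar : Fin M → ℝ) (hvbar : ∀ i, vbar i = -(s i) * v i)
    (hneg : ∀ i, vbar i ≤ 0)
    (i₀ : Fin M) (hi₀ : ∀ i, vbar i ≤ vbar i₀)
    (estar : EuclideanSpace ℝ (Fin M))
    (hestar : ∀ i, estar i = if i = i₀ then -(s i₀) else 0) :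
    estar ∈ D ∧ ∀ e ∈ D, ‖estar - v‖ ≤ ‖e - v‖ :=
  stmt_1_general M s hs D hD v vbar hvbar hneg i₀ hi₀ estar hestar
end
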